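/- arXiv:math/0409028 — 2 statements merged into one kernel-verified Lean document; each statement's English description precedes it below -/
import Mathlib

section
/- For any rank-r matroid M on an n-element linearly ordered set, the image of λ_M : S_n → W(n,r) is an order ideal in W(n,r): if w lies in the image of λ_M and v ≤ w in W(n,r), then v lies in the image of λ_M. -/
open Matroid Set

/-- The rank of a set `X` in a matroid `M`: the largest cardinality of an independent
subset of `X`. -/
noncomputable def matRk {α : Type*} (M : Matroid α) (X : Set α) : ℕ :=
  sSup {k : ℕ | ∃ I : Set α, I ⊆ X ∧ M.Indep I ∧ I.ncard = k}

/-- The set of positions of the ones of a 0-1 word of length `n`. -/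
def ones {n : ℕ} (v : Fin n → Bool) : Finset (Fin n) :=
  Finset.univ.filter (fun i => v i = true)

/-- The order on `W(n,r)`: `v ≤ w` iff `π_k(v) ≤ π_k(w)` for all `k`, where `π_k`
is the position of the `k`-th one. -/
def wordLE {n : ℕ} (v w : Fin n → Bool) : Prop :=
  (ones v).card = (ones w).card ∧
  ∀ (k : ℕ) (hv : k < (ones v).card) (hw : k < (ones w).card),
    (ones v).orderEmbOfFin rfl ⟨k, hv⟩ ≤ (ones w).orderEmbOfFin rfl ⟨k, hw⟩

/-- `λ_M(σ) = w_{M(S_σ)}`: the word of a matroid `M` on `Fin n` relative to the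
reordering `σ(e_1) < ⋯ < σ(e_n)` of the ground set. -/
noncomputable def lam {n : ℕ} (M : Matroid (Fin n)) (σ : Equiv.Perm (Fin n)) :
    Fin n → Bool :=
  fun i => decide
    (matRk M (⇑σ '' {j : Fin n | j < i}) < matRk M (⇑σ '' {j : Fin n | j ≤ i}))

/-! If the letters of `λ_M(σ)` at two adjacent positions `a ⋖ b` read `0 1`, then composing `σ`
with the transposition of `a` and `b` turns them into `1 0` and changes no other letter: the
element now at `a` was independent of a larger prefix, and the element now at `b` is spanned by
a smaller one. Conversely, every `v < w` in `W(n,r)` is reached from `w` by such moves of a one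
to the left: if `k` is the first index with `π_k(v) < π_k(w)`, the position just before
`π_k(w)` is free in `w`, and moving the `k`-th one there keeps `w` above `v`. Each move lowers
the sum of the positions of the ones, so induction on that sum finishes the proof. -/

theorem Matroid.eRk_lt_eRk_insert_iff {α : Type*} {M : Matroid α} {X : Set α} {e : α}
    (hX : M.eRk X ≠ ⊤) :
    M.eRk X < M.eRk (insert e X) ↔ e ∈ M.E \ M.closure X := by
  refine ⟨fun hlt => ⟨by_contra fun he => ?_, fun he => ?_⟩, fun he => ?_⟩
  · rw [eRk_insert_of_notMem_ground X he] at hlt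
    exact hlt.false
  · rw [← M.eRk_closure_eq (insert e X), closure_insert_eq_of_mem_closure he,
      eRk_closure_eq] at hlt
    exact hlt.false
  · rw [eRk_insert_eq_add_one he]
    exact (ENat.lt_add_one_iff hX).mpr le_rfl

theorem matRk_eq_eRk {α : Type*} [Finite α] (M : Matroid α) (X : Set α) :
    (matRk M X : ℕ∞) = M.eRk X := by
  have hfin : M.eRk X ≠ ⊤ := (M.isRkFinite_of_finite X.toFinite).eRk_lt_top.ne
  have hmax : IsGreatest {k : ℕ | ∃ I : Set α, I ⊆ X ∧ M.Indep I ∧ I.ncard = k}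
      (M.eRk X).toNat := by
    constructor
    · obtain ⟨I, hIX, hI, hcard⟩ := le_eRk_iff.mp (le_refl (M.eRk X))
      exact ⟨I, hIX, hI, by rw [Set.ncard, hcard]⟩
    · rintro k ⟨I, hIX, hI, rfl⟩
      rw [Set.ncard]
      exact ENat.toNat_le_toNat (hI.encard_le_eRk_of_subset hIX) hfin
  rw [matRk, hmax.csSup_eq, ENat.natCast_toNat hfin]

theorem lam_eq_true_iff {n : ℕ} (M : Matroid (Fin n)) (σ : Equiv.Perm (Fin n)) (i : Fin n) :
    lam M σ i = true ↔ σ i ∈ M.E \ M.closure (σ '' Iio i) := by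
  rw [lam, decide_eq_true_iff, Iio_def, Iic_def, ← Iio_insert, image_insert_eq,
    ← Nat.cast_lt (α := ℕ∞), matRk_eq_eRk, matRk_eq_eRk, eRk_lt_eRk_insert_iff]
  exact (M.isRkFinite_of_finite (toFinite _)).eRk_lt_top.ne

theorem Equiv.swap_image_Iio_of_covBy {α : Type*} [LinearOrder α] {a b i : α} (hab : a ⋖ b)
    (hi : i ≠ b) : Equiv.swap a b '' Iio i = Iio i := by
  ext x
  rw [mem_image_equiv, Equiv.symm_swap, mem_Iio, mem_Iio]
  have hab_iff : a < i ↔ b < i :=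
    ⟨fun h => (hab.ge_of_gt h).lt_of_ne hi.symm, hab.lt.trans⟩
  rcases eq_or_ne x a with rfl | hxa
  · rw [Equiv.swap_apply_left, hab_iff]
  rcases eq_or_ne x b with rfl | hxb
  · rw [Equiv.swap_apply_right, hab_iff]
  · rw [Equiv.swap_apply_of_ne_of_ne hxa hxb]

theorem lam_mul_swap {n : ℕ} (M : Matroid (Fin n)) (σ : Equiv.Perm (Fin n)) {a b : Fin n}
    (hab : a ⋖ b) (ha : lam M σ a = false) (hb : lam M σ b = true) :
    lam M (σ * Equiv.swap a b) = lam M σ ∘ Equiv.swap a b := by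
  have hprefix : ∀ i, i ≠ b → ⇑(σ * Equiv.swap a b) '' Iio i = σ '' Iio i := by
    intro i hi
    rw [Equiv.Perm.coe_mul, image_comp, Equiv.swap_image_Iio_of_covBy hab hi]
  rw [← Bool.not_eq_true, lam_eq_true_iff] at ha
  rw [lam_eq_true_iff] at hb
  funext i
  rw [Function.comp_apply, Bool.eq_iff_iff, lam_eq_true_iff, lam_eq_true_iff,
    Equiv.Perm.mul_apply]
  rcases eq_or_ne i a with rfl | hia
  · rw [Equiv.swap_apply_left, hprefix i hab.lt.ne, iff_true_intro hb, iff_true]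
    exact sdiff_subset_sdiff_right
      (M.closure_subset_closure (image_mono (Iio_subset_Iio hab.le))) hb
  rcases eq_or_ne i b with rfl | hib
  · rw [Equiv.swap_apply_right, iff_false_intro ha, iff_false]
    refine fun h => ha (sdiff_subset_sdiff_right (M.closure_subset_closure ?_) h)
    rw [← hprefix a hab.lt.ne, Equiv.Perm.coe_mul]
    exact image_mono (Iio_subset_Iio hab.le)
  · rw [Equiv.swap_apply_of_ne_of_ne hia hib, hprefix i hib]

theorem ones_injective {n : ℕ} : Function.Injective (ones (n := n)) := fun v w h => by
  funext i
  simpa [ones] using congrArg (i ∈ ·) h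

theorem ones_comp_swap {n : ℕ} {w : Fin n → Bool} {a b : Fin n} (ha : w a = false)
    (hb : w b = true) : ones (w ∘ Equiv.swap a b) = insert a ((ones w).erase b) := by
  ext x
  simp only [ones, Finset.mem_filter, Finset.mem_univ, true_and, Finset.mem_insert,
    Finset.mem_erase, Function.comp_apply]
  rcases eq_or_ne x a with rfl | hxa
  · simp [hb]
  rcases eq_or_ne x b with rfl | hxb
  · simp [ha, hxa]
  · simp [Equiv.swap_apply_of_ne_of_ne hxa hxb, hxa, hxb]

theorem StrictMono.update_of_forall_lt {ι β : Type*} [LinearOrder ι] [DecidableEq ι]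
    [Preorder β] {g : ι → β} (hg : StrictMono g) {k : ι} {x : β}
    (hlt : ∀ j < k, g j < x) (hgt : ∀ j, k < j → x < g j) :
    StrictMono (Function.update g k x) := by
  intro i j hij
  rcases eq_or_ne i k with rfl | hik
  · rw [Function.update_self, Function.update_of_ne hij.ne']
    exact hgt j hij
  rcases eq_or_ne j k with rfl | hjk
  · rw [Function.update_self, Function.update_of_ne hik]
    exact hlt i hij
  · rw [Function.update_of_ne hik, Function.update_of_ne hjk]
    exact hg hij

namespace Finset

variable {α : Type*} [LinearOrder α]

def GaleLE (s t : Finset α) : Prop :=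
  ∃ (c : ℕ) (hs : #s = c) (ht : #t = c), ∀ k, s.orderEmbOfFin hs k ≤ t.orderEmbOfFin ht k

theorem GaleLE.exists_covBy [PredOrder α] {s t : Finset α} (hst : GaleLE s t) (hne : s ≠ t) :
    ∃ a b, a ⋖ b ∧ a ∉ t ∧ b ∈ t ∧ GaleLE s (insert a (t.erase b)) := by
  obtain ⟨c, hs, ht, hle⟩ := hst
  set f := s.orderEmbOfFin hs
  set g := t.orderEmbOfFin ht
  have hex : {k | f k < g k}.Nonempty := by
    by_contra! hempty
    have hfg : ⇑f = g := funext fun k =>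
      (hle k).antisymm (not_lt.mp fun hk => (hempty.subset hk : k ∈ (∅ : Set _)))
    refine hne (coe_injective ?_)
    rw [← range_orderEmbOfFin s hs, ← range_orderEmbOfFin t ht, hfg]
  obtain ⟨k, hk, hmin⟩ := wellFounded_lt.has_min _ hex
  have hab : Order.pred (g k) ⋖ g k := Order.pred_covBy_of_not_isMin (not_isMin_of_lt hk)
  set a := Order.pred (g k)
  have hfa : f k ≤ a := hab.le_of_lt hk
  have hbelow : ∀ j < k, g j < a := fun j hj =>
    calc g j = f j := ((hle j).antisymm (not_lt.mp fun h => hmin j h hj)).symm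
      _ < f k := f.strictMono hj
      _ ≤ a := hfa
  have habove : ∀ j, k < j → a < g j := fun j hj => hab.lt.trans (g.strictMono hj)
  have ha : a ∉ t := by
    intro hat
    obtain ⟨j, hj⟩ : a ∈ Set.range g := by rwa [range_orderEmbOfFin]
    rcases lt_trichotomy j k with hjk | rfl | hjk
    · exact (hbelow j hjk).ne hj
    · exact hab.lt.ne' hj
    · exact (habove j hjk).ne' hj
  have hb : g k ∈ t := orderEmbOfFin_mem t ht k
  have hmem : ∀ j, Function.update g k a j ∈ insert a (t.erase (g k)) := fun j => by
    rcases eq_or_ne j k with rfl | hjk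
    · simp
    · rw [Function.update_of_ne hjk]
      exact mem_insert_of_mem (mem_erase.mpr ⟨g.injective.ne hjk, orderEmbOfFin_mem t ht j⟩)
  have hcard : #(insert a (t.erase (g k))) = c := by
    rw [card_insert_of_notMem (fun h => ha (mem_of_mem_erase h)), card_erase_of_mem hb, ht]
    exact Nat.sub_add_cancel (Nat.one_le_of_lt k.2)
  refine ⟨a, g k, hab, ha, hb, c, hs, hcard, fun j => ?_⟩
  rw [← orderEmbOfFin_unique hcard hmem
    (g.strictMono.update_of_forall_lt hbelow habove)]
  rcases eq_or_ne j k with rfl | hjk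
  · rwa [Function.update_self]
  · rw [Function.update_of_ne hjk]
    exact hle j

theorem GaleLE.induction {n : ℕ} {P : Finset (Fin n) → Prop}
    (hP : ∀ t a b, P t → a ⋖ b → a ∉ t → b ∈ t → P (insert a (t.erase b)))
    {s t : Finset (Fin n)} (hst : GaleLE s t) (ht : P t) : P s := by
  induction hsum : ∑ i ∈ t, (i : ℕ) using Nat.strong_induction_on generalizing t with
  | _ N ih =>
    by_cases hne : s = t
    · exact hne ▸ ht
    obtain ⟨a, b, hab, ha, hb, hst'⟩ := hst.exists_covBy hne
    refine ih _ ?_ hst' (hP t a b ht hab ha hb) rfl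
    have herase := sum_erase_add t (fun i => (i : ℕ)) hb
    have hab' : (a : ℕ) < b := hab.lt
    rw [sum_insert (fun h => ha (mem_of_mem_erase h))]
    omega

end Finset

theorem wordLE.galeLE_ones {n : ℕ} {v w : Fin n → Bool} (hvw : wordLE v w) :
    (ones v).GaleLE (ones w) := by
  obtain ⟨hcard, hle⟩ := hvw
  refine ⟨_, rfl, hcard.symm, fun k => ?_⟩
  calc (ones v).orderEmbOfFin rfl k ≤ (ones w).orderEmbOfFin rfl ⟨k, hcard ▸ k.2⟩ :=
        hle k k.2 _
    _ = (ones w).orderEmbOfFin hcard.symm k := Finset.orderEmbOfFin_eq_orderEmbOfFin_iff.mpr rfl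

theorem lam_image_order_ideal_general {n : ℕ} (M : Matroid (Fin n))
    (v w : Fin n → Bool) (hw : ∃ σ : Equiv.Perm (Fin n), lam M σ = w)
    (hvw : wordLE v w) :
    ∃ τ : Equiv.Perm (Fin n), lam M τ = v := by
  obtain ⟨σ, rfl⟩ := hw
  have hclosed : ∀ t a b, (∃ σ, ones (lam M σ) = t) → a ⋖ b → a ∉ t → b ∈ t →
      ∃ τ, ones (lam M τ) = insert a (t.erase b) := by
    rintro _ a b ⟨σ, rfl⟩ hab ha hb
    have ha' : lam M σ a = false := by simpa [ones] using ha
    have hb' : lam M σ b = true := by simpa [ones] using hb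
    exact ⟨σ * Equiv.swap a b, by rw [lam_mul_swap M σ hab ha' hb', ones_comp_swap ha' hb']⟩
  obtain ⟨τ, hτ⟩ := hvw.galeLE_ones.induction hclosed ⟨σ, rfl⟩
  exact ⟨τ, ones_injective hτ⟩

/-- For any rank-`r` matroid `M` on the `n`-element linearly ordered set
`Fin n`, the image of `λ_M : S_n → W(n,r)` is an order ideal in `W(n,r)`: if `w` is in
the image and `v ≤ w`, then `v` is in the image. -/
theorem lam_image_order_ideal {n r : ℕ} (M : Matroid (Fin n)) (hE : M.E = Set.univ)
    (hr : ∃ B : Set (Fin n), M.IsBase B ∧ B.ncard = r)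
    (v w : Fin n → Bool) (hw : ∃ σ : Equiv.Perm (Fin n), lam M σ = w)
    (hvw : wordLE v w) :
    ∃ τ : Equiv.Perm (Fin n), lam M τ = v :=
  lam_image_order_ideal_general M v w hw hvw
end

section
/- If M = M_w for a word w ∈ W(n,r), then λ_M : S_n → W(n,r) is order-reversing with respect to the strong Bruhat order on S_n: if σ ≤ τ in the Bruhat order, then λ_M(σ) ≥ λ_M(τ) in W(n,r). -/
open Matroid Set

/-- The flag on `Fin n` determined by a word `w` with `r` ones: `T_r` is everything,
and `T_{k-1} = { s : s < e_{π_k(w)} }` for `1 ≤ k ≤ r`. -/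
def flagOfWord {n : ℕ} (w : Fin n → Bool) (i : ℕ) : Set (Fin n) :=
  if h : i < (ones w).card
    then {s : Fin n | s < (ones w).orderEmbOfFin rfl ⟨i, h⟩} else Set.univ

/-- The number of inversions (the Coxeter length) of a permutation of `Fin n`. -/
def inversions {n : ℕ} (σ : Equiv.Perm (Fin n)) : ℕ :=
  (Finset.univ.filter
    (fun p : Fin n × Fin n => p.1 < p.2 ∧ σ p.2 < σ p.1)).card

/-- The strong Bruhat order on the symmetric group `S_n`: the partial order generated
by `σ < σ·t` for transpositions `t` with `ℓ(σ·t) > ℓ(σ)`, where `ℓ` is the number of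
inversions. -/
def bruhatLE {n : ℕ} (σ τ : Equiv.Perm (Fin n)) : Prop :=
  Relation.ReflTransGen
    (fun a b => inversions a < inversions b ∧
      ∃ i j : Fin n, i ≠ j ∧ b = a * Equiv.swap i j) σ τ

/-!
The freedom matroid `M_w` is shifted: each `T_i` is an initial segment, so replacing an element of
an independent set by a larger one keeps it independent, and hence the rank of a set cannot drop
under such a replacement. A Bruhat step `σ < σ (a b)` with `a < b` forces `σ a < σ b`, so every
initial segment `σ {e_1, …, e_k}` either stays put or has `σ a` replaced by the larger `σ b`: the
prefix ranks of `σ (a b)` dominate those of `σ`. The number of ones among the first `k` letters of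
`λ_M(σ)` is that prefix rank, and larger prefix counts put the `k`-th one earlier, i.e. give a
smaller word.
-/

theorem Finset.orderEmbOfFin_le_iff_lt_card_filter {α : Type*} [LinearOrder α] (s : Finset α)
    {k : ℕ} (hk : k < s.card) (i : α) :
    s.orderEmbOfFin rfl ⟨k, hk⟩ ≤ i ↔ k < (s.filter (· ≤ i)).card := by
  set e := s.orderEmbOfFin rfl
  constructor
  · intro h
    have hsub : (Finset.Iic (⟨k, hk⟩ : Fin s.card)).image e ⊆ s.filter (· ≤ i) := by
      intro x hx
      obtain ⟨m, hm, rfl⟩ := Finset.mem_image.mp hx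
      exact Finset.mem_filter.mpr
        ⟨s.orderEmbOfFin_mem rfl m, (e.le_iff_le.mpr (Finset.mem_Iic.mp hm)).trans h⟩
    have hcard := Finset.card_le_card hsub
    rw [Finset.card_image_of_injective _ e.injective, Fin.card_Iic] at hcard
    exact hcard
  · intro h
    by_contra! hlt
    have hsub : s.filter (· ≤ i) ⊆ (Finset.Iio (⟨k, hk⟩ : Fin s.card)).image e := by
      intro j hj
      obtain ⟨hjs, hji⟩ := Finset.mem_filter.mp hj
      obtain ⟨m, rfl⟩ : j ∈ Set.range e := by rwa [Finset.range_orderEmbOfFin]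
      exact Finset.mem_image_of_mem _ (Finset.mem_Iio.mpr (e.lt_iff_lt.mp (hji.trans_lt hlt)))
    have hcard := (Finset.card_le_card hsub).trans Finset.card_image_le
    rw [Fin.card_Iio] at hcard
    exact (h.trans_le hcard).false

theorem wordLE_of_card_filter_le {n : ℕ} {u v : Fin n → Bool}
    (hcard : (ones u).card = (ones v).card)
    (hpre : ∀ i, ((ones v).filter (· ≤ i)).card ≤ ((ones u).filter (· ≤ i)).card) :
    wordLE u v := by
  refine ⟨hcard, fun k hu hv => ?_⟩
  rw [Finset.orderEmbOfFin_le_iff_lt_card_filter]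
  exact ((Finset.orderEmbOfFin_le_iff_lt_card_filter _ hv _).mp le_rfl).trans_le (hpre _)

theorem card_filter_ones_val_lt {n : ℕ} (v : Fin n → Bool) {F : ℕ → ℕ} (hF0 : F 0 = 0)
    (hF : ∀ k (hk : k < n), F (k + 1) = F k + (v ⟨k, hk⟩).toNat) :
    ∀ k ≤ n, ((ones v).filter (fun j : Fin n => (j : ℕ) < k)).card = F k
  | 0, _ => by simp [hF0]
  | k + 1, hk => by
    have hsplit : (ones v).filter (fun j : Fin n => (j : ℕ) < k + 1) =
        (ones v).filter (fun j : Fin n => (j : ℕ) < k) ∪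
          (ones v).filter (fun j => j = ⟨k, hk⟩) := by
      rw [← Finset.filter_or]
      exact Finset.filter_congr fun j _ => by simp only [Fin.ext_iff]; omega
    have hlast : ((ones v).filter (fun j => j = ⟨k, hk⟩)).card = (v ⟨k, hk⟩).toNat := by
      rw [Finset.filter_eq']
      cases hv : v ⟨k, hk⟩ <;> simp [ones, hv]
    rw [hsplit, Finset.card_union_of_disjoint, card_filter_ones_val_lt v hF0 hF k (by omega),
      hlast, hF k hk]
    exact Finset.disjoint_filter.mpr fun j _ h1 h2 => by rw [h2] at h1; exact lt_irrefl _ h1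

section Rank

variable {α : Type*} {X Y : Set α}

theorem coe_matRk [Finite α] (M : Matroid α) (X : Set α) : (matRk M X : ℕ∞) = M.eRk X := by
  obtain ⟨I, hI⟩ := M.exists_isBasis' X
  have hgreatest : IsGreatest {k | ∃ J ⊆ X, M.Indep J ∧ J.ncard = k} I.ncard := by
    refine ⟨⟨I, hI.subset, hI.indep, rfl⟩, ?_⟩
    rintro _ ⟨J, hJX, hJ, rfl⟩
    have hJI := hJ.encard_le_eRk_of_subset hJX
    rwa [← hI.encard_eq_eRk, ← J.toFinite.cast_ncard_eq, ← I.toFinite.cast_ncard_eq,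
      Nat.cast_le] at hJI
  rw [matRk, hgreatest.csSup_eq, I.toFinite.cast_ncard_eq, hI.encard_eq_eRk]

theorem matRk_mono [Finite α] (M : Matroid α) (hXY : X ⊆ Y) : matRk M X ≤ matRk M Y := by
  have := M.eRk_mono hXY
  rw [← coe_matRk, ← coe_matRk] at this
  exact_mod_cast this

theorem matRk_insert_le_add_one [Finite α] (M : Matroid α) (e : α) (X : Set α) :
    matRk M (insert e X) ≤ matRk M X + 1 := by
  have := M.eRk_insert_le_add_one e X
  rw [← coe_matRk, ← coe_matRk] at this
  exact_mod_cast this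

theorem matRk_empty [Finite α] (M : Matroid α) : matRk M ∅ = 0 := by
  have := coe_matRk M ∅
  rwa [M.eRk_empty, Nat.cast_eq_zero] at this

end Rank

section Shifted

variable {α : Type*} {M : Matroid α} {X : Set α} {x y : α}

def Matroid.IsShifted [LT α] (M : Matroid α) : Prop :=
  ∀ ⦃I : Set α⦄ ⦃x y : α⦄, M.Indep I → x ∈ I → y ∉ I → x < y → M.Indep (insert y I \ {x})

theorem Matroid.IsShifted.eRk_le_eRk_exchange [LT α] (hM : M.IsShifted) (hxy : x < y)
    (hy : y ∉ X) : M.eRk X ≤ M.eRk (insert y X \ {x}) := by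
  obtain ⟨I, hI⟩ := M.exists_isBasis' X
  rw [← hI.encard_eq_eRk]
  by_cases hxI : x ∈ I
  · have hyI : y ∉ I := fun h => hy (hI.subset h)
    rw [← encard_exchange' hyI hxI]
    exact (hM hI.indep hxI hyI hxy).encard_le_eRk_of_subset
      (sdiff_subset_sdiff_left (insert_subset_insert hI.subset))
  · refine hI.indep.encard_le_eRk_of_subset fun z hz => ⟨mem_insert_of_mem _ (hI.subset hz), ?_⟩
    rintro rfl
    exact hxI hz

theorem Matroid.IsShifted.matRk_le_matRk_exchange [LT α] [Finite α] (hM : M.IsShifted)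
    (hxy : x < y) (hy : y ∉ X) : matRk M X ≤ matRk M (insert y X \ {x}) := by
  have := hM.eRk_le_eRk_exchange hxy hy
  rw [← coe_matRk, ← coe_matRk] at this
  exact_mod_cast this

theorem ncard_insert_sdiff_inter_le_of_isLowerSet [Preorder α] [Finite α] {I T : Set α}
    (hT : IsLowerSet T) (hxy : x < y) (hx : x ∈ I) (hy : y ∉ I) :
    (insert y I \ {x} ∩ T).ncard ≤ (I ∩ T).ncard := by
  by_cases hyT : y ∈ T
  · calc (insert y I \ {x} ∩ T).ncard ≤ (insert y (I ∩ T) \ {x}).ncard := by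
          refine ncard_le_ncard ?_
          rintro z ⟨⟨rfl | hzI, hzx⟩, hzT⟩
          exacts [⟨mem_insert _ _, hzx⟩, ⟨mem_insert_of_mem _ ⟨hzI, hzT⟩, hzx⟩]
      _ = (I ∩ T).ncard := ncard_exchange' (fun h => hy h.1) ⟨hx, hT hxy.le hyT⟩
  · refine ncard_le_ncard ?_
    rintro z ⟨⟨rfl | hzI, -⟩, hzT⟩
    exacts [absurd hzT hyT, ⟨hzI, hzT⟩]

theorem Matroid.isShifted_of_indep_iff [Preorder α] [Finite α] {T : ℕ → Set α}
    (hT : ∀ i, IsLowerSet (T i)) {r : ℕ}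
    (hInd : ∀ I, M.Indep I ↔ ∀ i ≤ r, (I ∩ T i).ncard ≤ i) : M.IsShifted := by
  intro I x y hI hx hy hxy
  rw [hInd] at hI ⊢
  exact fun i hi => (ncard_insert_sdiff_inter_le_of_isLowerSet (hT i) hxy hx hy).trans (hI i hi)

theorem isLowerSet_flagOfWord {n : ℕ} (w : Fin n → Bool) (i : ℕ) :
    IsLowerSet (flagOfWord w i) := by
  unfold flagOfWord
  split_ifs
  exacts [fun _ _ hba ha => hba.trans_lt ha, isLowerSet_univ]

end Shifted

section PrefixRank

variable {n : ℕ} (M : Matroid (Fin n)) (σ : Equiv.Perm (Fin n))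

noncomputable def prefixRk (k : ℕ) : ℕ :=
  matRk M (σ '' {j : Fin n | (j : ℕ) < k})

theorem prefixRk_zero : prefixRk M σ 0 = 0 := by
  simp [prefixRk, matRk_empty]

theorem prefixRk_length : prefixRk M σ n = matRk M univ := by
  simp [prefixRk]

theorem prefixRk_succ {k : ℕ} (hk : k < n) :
    prefixRk M σ (k + 1) = prefixRk M σ k + (lam M σ ⟨k, hk⟩).toNat := by
  have hlt : {j : Fin n | j < ⟨k, hk⟩} = {j : Fin n | (j : ℕ) < k} := rfl
  have hle : {j : Fin n | j ≤ ⟨k, hk⟩} = {j : Fin n | (j : ℕ) < k + 1} := by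
    ext j
    simp only [mem_ofPred_eq, Fin.le_def]
    omega
  have hlam : lam M σ ⟨k, hk⟩ = decide (prefixRk M σ k < prefixRk M σ (k + 1)) := by
    rw [lam, hlt, hle, prefixRk, prefixRk]
  have hinsert : {j : Fin n | (j : ℕ) < k + 1} = insert ⟨k, hk⟩ {j : Fin n | (j : ℕ) < k} := by
    ext j
    simp only [mem_ofPred_eq, mem_insert_iff, Fin.ext_iff]
    omega
  have hmono : prefixRk M σ k ≤ prefixRk M σ (k + 1) :=
    matRk_mono M (image_mono fun j (hj : (j : ℕ) < k) => Nat.lt_succ_of_lt hj)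
  have hstep : prefixRk M σ (k + 1) ≤ prefixRk M σ k + 1 := by
    rw [prefixRk, hinsert, image_insert_eq]
    exact matRk_insert_le_add_one M _ _
  rw [hlam]
  by_cases h : prefixRk M σ k < prefixRk M σ (k + 1) <;> simp [h] <;> omega

theorem card_filter_ones_lam {k : ℕ} (hk : k ≤ n) :
    ((ones (lam M σ)).filter (fun j : Fin n => (j : ℕ) < k)).card = prefixRk M σ k :=
  card_filter_ones_val_lt _ (prefixRk_zero M σ) (fun _ => prefixRk_succ M σ) k hk

theorem wordLE_lam_of_prefixRk_le {σ τ : Equiv.Perm (Fin n)}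
    (h : ∀ k, prefixRk M σ k ≤ prefixRk M τ k) : wordLE (lam M τ) (lam M σ) := by
  have hcard : ∀ π, (ones (lam M π)).card = matRk M univ := fun π => by
    rw [← prefixRk_length M π, ← card_filter_ones_lam M π le_rfl,
      Finset.filter_true_of_mem fun j _ => j.isLt]
  have hpre : ∀ π (i : Fin n),
      ((ones (lam M π)).filter (· ≤ i)).card = prefixRk M π (i + 1) := fun π i => by
    rw [← card_filter_ones_lam M π i.isLt]
    congr 1
    exact Finset.filter_congr fun j _ => by rw [Fin.le_def]; omega
  refine wordLE_of_card_filter_le ((hcard τ).trans (hcard σ).symm) fun i => ?_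
  rw [hpre, hpre]
  exact h _

end PrefixRank

section Inversions

open Equiv

variable {n : ℕ} {σ : Perm (Fin n)} {a b : Fin n}

-- Only pairs meeting `{a, b}` change their relative order under `swap a b`; for each of them
-- the missing inequality comes from `σ a < σ b`.
theorem mul_swap_apply_lt_of_inversion (hab : a < b) (hσ : σ a < σ b) {p q : Fin n} (hpq : p < q)
    (hinv : σ q < σ p) (hswap : swap a b q < swap a b p) :
    σ (swap a b q) < σ (swap a b p) := by
  simp only [swap_apply_def] at *
  split_ifs at * <;> subst_vars <;> grind

theorem inversions_le_inversions_mul_swap (hab : a < b) (hσ : σ a < σ b) :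
    inversions σ ≤ inversions (σ * swap a b) := by
  set s := swap a b
  let f : Fin n × Fin n → Fin n × Fin n := fun p => if s p.1 < s p.2 then (s p.1, s p.2) else p
  refine Finset.card_le_card_of_injOn f (fun p hp => ?_) (fun p hp q hq hpq => ?_)
  · simp only [Finset.coe_filter, Finset.mem_univ, true_and, mem_ofPred_eq] at hp ⊢
    simp only [f, Perm.mul_apply]
    split_ifs with h
    · simpa [s] using ⟨h, hp.2⟩
    · have hswap : s p.2 < s p.1 := (not_lt.mp h).lt_of_ne (s.injective.ne hp.1.ne')
      exact ⟨hp.1, mul_swap_apply_lt_of_inversion hab hσ hp.1 hp.2 hswap⟩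
  · simp only [Finset.coe_filter, Finset.mem_univ, true_and, mem_ofPred_eq] at hp hq
    simp only [f] at hpq
    split_ifs at hpq with hp' hq' hq'
    · simpa [Prod.ext_iff, s] using hpq
    · rw [← hpq] at hq'
      simp only [s, swap_apply_self] at hq'
      exact absurd hp.1 hq'
    · rw [hpq] at hp'
      simp only [s, swap_apply_self] at hp'
      exact absurd hq.1 hp'
    · exact hpq

theorem lt_of_inversions_lt_inversions_mul_swap (hab : a < b)
    (h : inversions σ < inversions (σ * swap a b)) : σ a < σ b := by
  by_contra! hba
  have hba' : (σ * swap a b) a < (σ * swap a b) b := by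
    simpa using hba.lt_of_ne (σ.injective.ne hab.ne')
  have := inversions_le_inversions_mul_swap hab hba'
  rw [mul_assoc, swap_mul_self, mul_one] at this
  omega

end Inversions

theorem Equiv.image_swap_eq_self_of_mem_iff {α : Type*} [DecidableEq α] {A : Set α} {a b : α}
    (h : a ∈ A ↔ b ∈ A) : Equiv.swap a b '' A = A := by
  ext z
  rw [image_eq_preimage_symm, Equiv.symm_swap, mem_preimage, Equiv.swap_apply_def]
  split_ifs with hza hzb <;> simp_all

section BruhatStep

open Equiv

variable {n : ℕ} {M : Matroid (Fin n)}

theorem prefixRk_le_prefixRk_mul_swap (hM : M.IsShifted) {σ : Perm (Fin n)} {a b : Fin n}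
    (hab : a < b) (hσ : σ a < σ b) (k : ℕ) :
    prefixRk M σ k ≤ prefixRk M (σ * swap a b) k := by
  set A := {j : Fin n | (j : ℕ) < k}
  have himage : ⇑(σ * swap a b) '' A = σ '' (swap a b '' A) := by
    rw [Perm.coe_mul, image_comp]
  rw [prefixRk, prefixRk, himage]
  by_cases hcut : a ∈ A ∧ b ∉ A
  · have hσb : σ b ∉ σ '' A := fun h => hcut.2 (σ.injective.mem_set_image.mp h)
    rw [image_swap_of_mem_of_notMem hcut.1 hcut.2, image_sdiff σ.injective, image_insert_eq,
      image_singleton]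
    exact hM.matRk_le_matRk_exchange hσ hσb
  · have hmem : a ∈ A ↔ b ∈ A := by
      simp only [A, mem_ofPred_eq] at hcut ⊢
      omega
    rw [image_swap_eq_self_of_mem_iff hmem]

theorem prefixRk_le_of_bruhat_step (hM : M.IsShifted) {σ τ : Perm (Fin n)}
    (h : inversions σ < inversions τ ∧ ∃ i j : Fin n, i ≠ j ∧ τ = σ * swap i j) (k : ℕ) :
    prefixRk M σ k ≤ prefixRk M τ k := by
  obtain ⟨hlen, i, j, hij, rfl⟩ := h
  wlog hlt : i < j generalizing i j
  · rw [swap_comm] at hlen ⊢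
    exact this j i hij.symm hlen (lt_of_le_of_ne (not_lt.mp hlt) hij.symm)
  exact prefixRk_le_prefixRk_mul_swap hM hlt (lt_of_inversions_lt_inversions_mul_swap hlt hlen) k

end BruhatStep

theorem lam_bruhat_order_reversing_general {n r : ℕ} (w : Fin n → Bool)
    (M : Matroid (Fin n))
    (hInd : ∀ I : Set (Fin n),
      M.Indep I ↔ ∀ i ≤ r, (I ∩ flagOfWord w i).ncard ≤ i)
    (σ τ : Equiv.Perm (Fin n)) (hστ : bruhatLE σ τ) :
    wordLE (lam M τ) (lam M σ) := by
  have hM : M.IsShifted := isShifted_of_indep_iff (isLowerSet_flagOfWord w) hInd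
  refine wordLE_lam_of_prefixRk_le M fun k => ?_
  induction hστ with
  | refl => exact le_rfl
  | tail _ hstep ih => exact ih.trans (prefixRk_le_of_bruhat_step hM hstep k)

/-- If `M = M_w` is the freedom matroid of a word `w ∈ W(n,r)`, then
`λ_M : S_n → W(n,r)` is order-reversing with respect to the strong Bruhat order:
`σ ≤ τ` in the Bruhat order implies `λ_M(σ) ≥ λ_M(τ)` in `W(n,r)`. -/
theorem lam_bruhat_order_reversing {n r : ℕ} (w : Fin n → Bool)
    (hwr : (ones w).card = r)
    (M : Matroid (Fin n)) (hE : M.E = Set.univ)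
    (hInd : ∀ I : Set (Fin n),
      M.Indep I ↔ ∀ i ≤ r, (I ∩ flagOfWord w i).ncard ≤ i)
    (σ τ : Equiv.Perm (Fin n)) (hστ : bruhatLE σ τ) :
    wordLE (lam M τ) (lam M σ) :=
  lam_bruhat_order_reversing_general w M hInd σ τ hστ
end
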